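/- arXiv:2305.00405 — 7 statements merged into one kernel-verified Lean document; each statement's English description precedes it below -/
import Mathlib

section
/- Let (h_k) be polynomials over GF(2) with h_1 = x+1, h_2 = x^2+x+1, and h_k = x·h_{k-1} + h_{k-2} for k ≥ 3. Let K = GF(2)(x)[Y]/(Y^2 + xY + 1) and ρ the image of Y in K. Then for all k ≥ 1, x·h_k = (1+ρ)ρ^k + (1+ρ^{-1})ρ^{-k} in K. -/
/-- The polynomial `Y^2 + x·Y + 1` over the rational function field `GF(2)(x)`. -/
noncomputable def daiPoly : Polynomial (RatFunc (ZMod 2)) :=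
  Polynomial.X ^ 2 + Polynomial.C RatFunc.X * Polynomial.X + 1

/-- The quadratic extension `K = GF(2)(x)[Y]/(Y² + xY + 1)`. -/
noncomputable abbrev daiK : Type := AdjoinRoot daiPoly

/-- `ρ`, the image of `Y` in `K`. -/
noncomputable def daiRho : daiK := AdjoinRoot.root daiPoly

theorem stmt3 (h : ℕ → Polynomial (ZMod 2))
    (h1 : h 1 = Polynomial.X + 1)
    (h2 : h 2 = Polynomial.X ^ 2 + Polynomial.X + 1)
    (hrec : ∀ k, 3 ≤ k → h k = Polynomial.X * h (k - 1) + h (k - 2)) :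
    ∀ k, 1 ≤ k →
      algebraMap (RatFunc (ZMod 2)) daiK
          (algebraMap (Polynomial (ZMod 2)) (RatFunc (ZMod 2)) (Polynomial.X * h k))
        = (1 + daiRho) * daiRho ^ k
            + (1 + Ring.inverse daiRho) * (Ring.inverse daiRho) ^ k := by
  set F := RatFunc (ZMod 2)
  set r : daiK := daiRho with hr
  set x' : daiK := algebraMap F daiK RatFunc.X with hx'
  set φ : Polynomial (ZMod 2) →+* daiK :=
    (algebraMap F daiK).comp (algebraMap (Polynomial (ZMod 2)) F) with hφ
  have hP2 : (2 : Polynomial (ZMod 2)) = 0 := by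
    rw [← map_ofNat (Polynomial.C) 2, show (2 : ZMod 2) = 0 from rfl, map_zero]
  have htwo : (2 : daiK) = 0 := by
    rw [← map_ofNat φ 2, hP2, map_zero]
  have hroot : r ^ 2 + x' * r + 1 = 0 := by
    have := AdjoinRoot.eval₂_root daiPoly
    conv_lhs at this => arg 3; rw [daiPoly]
    simpa [daiRho, hr, hx', AdjoinRoot.algebraMap_eq] using this
  have hsq : r ^ 2 = x' * r + 1 := by linear_combination hroot - (x' * r + 1) * htwo
  have hmul : r * (x' + r) = 1 := by linear_combination hroot - htwo
  have hssq : (x' + r) ^ 2 = x' * (x' + r) + 1 := by linear_combination hroot - htwo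
  have hinv : Ring.inverse r = x' + r := by
    have := Ring.inverse_unit (Units.mkOfMulEqOne r (x' + r) hmul)
    exact this
  have hφeq : ∀ p : Polynomial (ZMod 2),
      algebraMap F daiK (algebraMap (Polynomial (ZMod 2)) F p) = φ p := fun p => rfl
  have hφX : φ Polynomial.X = x' := by
    rw [hφ, hx']
    exact congrArg (algebraMap F daiK) RatFunc.algebraMap_X
  suffices H : ∀ k, 1 ≤ k → φ (Polynomial.X * h k)
      = (1 + r) * r ^ k + (1 + (x' + r)) * (x' + r) ^ k by
    intro k hk; rw [hφeq, hinv]; exact H k hk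
  intro k hk
  induction k using Nat.strong_induction_on with
  | _ k ih =>
    match k, hk with
    | 1, _ =>
        rw [h1, map_mul, map_add, map_one, hφX]
        linear_combination (-(r + r^2 + x'*r)) * htwo
    | 2, _ =>
        rw [h2, map_mul, map_add, map_add, map_pow, map_one, hφX]
        linear_combination (-3*x') * hroot + (2*x' - x'*r - r^2 - r^3) * htwo
    | (n + 3), _ =>
        have e1 := ih (n + 2) (by omega) (by omega)
        have e2 := ih (n + 1) (by omega) (by omega)
        rw [hrec (n + 3) (by omega)]
        simp only [show n + 3 - 1 = n + 2 from rfl, show n + 3 - 2 = n + 1 from rfl]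
        rw [map_mul, map_add, map_mul, hφX]
        rw [map_mul, hφX] at e1 e2
        have hrn : r ^ (n + 3) = x' * r ^ (n + 2) + r ^ (n + 1) := by
          have e : r ^ (n + 3) = r ^ (n + 1) * r ^ 2 := by ring
          rw [e, hsq]; ring
        have hsn : (x' + r) ^ (n + 3)
            = x' * (x' + r) ^ (n + 2) + (x' + r) ^ (n + 1) := by
          have e : (x' + r) ^ (n + 3) = (x' + r) ^ (n + 1) * (x' + r) ^ 2 := by ring
          rw [e, hssq]; ring
        rw [hrn, hsn]
        linear_combination x' * e1 + e2
end

section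
/- With f^(k), g^(k) in GF(2)[x,z] defined by f^(0) = x+z, g^(0) = z, and the parity-based recursion, for every k ≥ 0 the polynomials f^(k) and g^(k) are coprime in GF(2)[x,z]. -/
open MvPolynomial

lemma primeXMv {n : ℕ} {K : Type*} [Field K] (i : Fin (n+1)) :
    Prime (X i : MvPolynomial (Fin (n+1)) K) := by
  induction n with
  | zero =>
    have h0 : i = 0 := Fin.fin_one_eq_zero i
    subst h0
    rw [← MulEquiv.prime_iff (finSuccEquiv K 0).toMulEquiv]
    show Prime (finSuccEquiv K 0 (X 0))
    rw [finSuccEquiv_X_zero]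
    exact Polynomial.prime_X
  | succ n ih =>
    rw [← MulEquiv.prime_iff (finSuccEquiv K (n+1)).toMulEquiv]
    show Prime (finSuccEquiv K (n+1) (X i))
    rcases Fin.eq_zero_or_eq_succ i with h | ⟨j, rfl⟩
    · subst h; rw [finSuccEquiv_X_zero]; exact Polynomial.prime_X
    · rw [finSuccEquiv_X_succ, Polynomial.prime_C_iff]; exact ih j

lemma notdvdX {i j : Fin 2} (h : i ≠ j) :
    ¬ (X i : MvPolynomial (Fin 2) (ZMod 2)) ∣ X j := by
  rintro ⟨c, hc⟩
  have := congrArg (eval (fun k => if k = j then (1 : ZMod 2) else 0)) hc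
  simp [h] at this

lemma relprime_of_prime_not_dvd {α : Type*} [CommMonoidWithZero α] [IsCancelMulZero α]
    {p a d : α} (hp : Prime p) (hpa : ¬ p ∣ a) (hda : d ∣ a) : IsRelPrime d p := by
  intro e hed hep
  by_contra hu
  obtain ⟨c, hc⟩ := hep
  rcases hp.irreducible.isUnit_or_isUnit hc with h | h
  · exact hu h
  · have hpe : p ∣ e := by rw [hc]; exact (IsUnit.mul_right_dvd h).mpr dvd_rfl
    exact hpa ((hpe.trans hed).trans hda)

theorem stmt8 (f g : ℕ → MvPolynomial (Fin 2) (ZMod 2))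
    (hf0 : f 0 = MvPolynomial.X 0 + MvPolynomial.X 1)
    (hg0 : g 0 = MvPolynomial.X 1)
    (heven : ∀ k, Even k →
      f (k + 1) = f k ∧ g (k + 1) = MvPolynomial.X 1 * g k)
    (hodd : ∀ k, ¬ Even k →
      f (k + 1) = MvPolynomial.X 0 * f k + g k ∧ g (k + 1) = MvPolynomial.X 1 * f k) :
    ∀ k, ∀ d : MvPolynomial (Fin 2) (ZMod 2), d ∣ f k → d ∣ g k → IsUnit d := by
  have prime1 : Prime (X 1 : MvPolynomial (Fin 2) (ZMod 2)) := primeXMv 1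
  have prime0 : Prime (X 0 : MvPolynomial (Fin 2) (ZMod 2)) := primeXMv 0
  have key : ∀ k, (∀ d, d ∣ f k → d ∣ g k → IsUnit d) ∧
      (¬ (X 1 : MvPolynomial (Fin 2) (ZMod 2)) ∣ f k) ∧ X 1 ∣ g k := by
    intro k
    induction k with
    | zero =>
      refine ⟨?_, ?_, hg0 ▸ dvd_refl _⟩
      · intro d hdf hdg
        rw [hf0] at hdf; rw [hg0] at hdg
        have hdx : d ∣ X 0 := by
          have := dvd_sub hdf hdg
          simpa using this
        -- d ∣ X 0 and d ∣ X 1 → unit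
        rcases hdx with ⟨e, he⟩
        rcases prime0.irreducible.isUnit_or_isUnit he with h | h
        · exact h
        · exfalso
          have hx0d : (X 0 : MvPolynomial (Fin 2) (ZMod 2)) ∣ d := by
            rw [he]; exact (IsUnit.mul_right_dvd h).mpr dvd_rfl
          exact notdvdX (show (0 : Fin 2) ≠ 1 by decide) (hx0d.trans hdg)
      · rw [hf0]
        intro hdvd
        have : (X 1 : MvPolynomial (Fin 2) (ZMod 2)) ∣ X 0 := by
          have := dvd_sub hdvd (dvd_refl (X 1 : MvPolynomial (Fin 2) (ZMod 2)))
          simpa using this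
        exact notdvdX (by decide) this
    | succ k ih =>
      obtain ⟨hA, hB, hC⟩ := ih
      by_cases hk : Even k
      · obtain ⟨hf', hg'⟩ := heven k hk
        refine ⟨?_, hf' ▸ hB, hg' ▸ Dvd.intro _ rfl⟩
        intro d hdf hdg
        rw [hf'] at hdf; rw [hg'] at hdg
        have hrel : IsRelPrime d (X 1) := relprime_of_prime_not_dvd prime1 hB hdf
        exact hA d hdf (hrel.dvd_of_dvd_mul_left hdg)
      · obtain ⟨hf', hg'⟩ := hodd k hk
        have hB' : ¬ (X 1 : MvPolynomial (Fin 2) (ZMod 2)) ∣ f (k+1) := by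
          rw [hf']
          intro hdvd
          have hxf : (X 1 : MvPolynomial (Fin 2) (ZMod 2)) ∣ X 0 * f k := by
            have := dvd_sub hdvd hC
            simpa using this
          rcases prime1.2.2 _ _ hxf with h | h
          · exact notdvdX (by decide) h
          · exact hB h
        refine ⟨?_, hB', hg' ▸ Dvd.intro _ rfl⟩
        intro d hdf hdg
        have hrel : IsRelPrime d (X 1) := relprime_of_prime_not_dvd prime1 hB' hdf
        rw [hg'] at hdg
        have hdfk : d ∣ f k := hrel.dvd_of_dvd_mul_left hdg
        have hdgk : d ∣ g k := by
          have : d ∣ (X 0 * f k + g k) - X 0 * f k :=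
            dvd_sub (hf' ▸ hdf) (Dvd.dvd.mul_left hdfk _)
          simpa using this
        exact hA d hdfk hdgk
  exact fun k => (key k).1
end

section
/- With f^(k) in GF(2)[x,z] defined by f^(0) = x+z and the parity-based recursion, each f^(k) is a homogeneous polynomial of degree ⌊(k+2)/2⌋ whose leading (grlex) term x^{⌊(k+2)/2⌋} has coefficient 1; in particular f^(k)(1,0) = 1 for all k ≥ 0. -/
/-!
Only the pure power of `x` survives evaluation at `(1, 0)`, so for a homogeneous polynomial of
degree `n` that evaluation is the coefficient of `x ^ n`. The degrees of `f^(k)` and `g^(k)` are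
tracked by a joint induction, while `g^(k)` is always a multiple of `z` and so vanishes at
`(1, 0)`; hence `f^(k)(1, 0)` never changes from `f^(0)(1, 0) = 1`.
-/

open MvPolynomial

theorem MvPolynomial.IsHomogeneous.eval_piSingle_one {σ R : Type*} [CommSemiring R]
    [DecidableEq σ] {p : MvPolynomial σ R} {n : ℕ} (hp : p.IsHomogeneous n) (i : σ) :
    eval (Pi.single i 1) p = coeff (Finsupp.single i n) p := by
  rw [eval_eq, Finset.sum_eq_single (Finsupp.single i n)]
  · rw [Finset.prod_eq_one, mul_one]
    intro j hj
    rw [Finset.mem_singleton.mp (Finsupp.support_single_subset hj)]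
    simp
  · intro d hd hne
    obtain ⟨j, hji, hj⟩ : ∃ j, j ≠ i ∧ d j ≠ 0 := by
      by_contra! h
      have hd_single : d = Finsupp.single i (d i) := by
        ext j
        by_cases hji : j = i
        · simp [hji]
        · simp [Ne.symm hji, h j hji]
      have hdeg := hp (mem_support_iff.mp hd)
      rw [hd_single, Finsupp.weight_single, Pi.one_apply, smul_eq_mul, mul_one] at hdeg
      exact hne (hdeg ▸ hd_single)
    refine mul_eq_zero_of_right _ (Finset.prod_eq_zero (Finsupp.mem_support_iff.mpr hj) ?_)
    simp [hji, hj]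
  · intro h
    rw [notMem_support_iff.mp h, zero_mul]

section Recursion

variable {R : Type*} [CommSemiring R] (f g : ℕ → MvPolynomial (Fin 2) R)

theorem eval_g_eq_zero (hg0 : g 0 = X 1)
    (hg_even : ∀ k, Even k → g (k + 1) = X 1 * g k)
    (hg_odd : ∀ k, ¬ Even k → g (k + 1) = X 1 * f k) (k : ℕ) :
    eval ![1, 0] (g k) = 0 := by
  cases k with
  | zero => simp [hg0]
  | succ k =>
    by_cases hk : Even k
    · simp [hg_even k hk]
    · simp [hg_odd k hk]

theorem eval_f_eq_one (hf0 : f 0 = X 0 + X 1) (hg : ∀ k, eval ![1, 0] (g k) = 0)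
    (hf_even : ∀ k, Even k → f (k + 1) = f k)
    (hf_odd : ∀ k, ¬ Even k → f (k + 1) = X 0 * f k + g k) (k : ℕ) :
    eval ![1, 0] (f k) = 1 := by
  induction k with
  | zero => simp [hf0]
  | succ k ih =>
    by_cases hk : Even k
    · rw [hf_even k hk, ih]
    · simp [hf_odd k hk, ih, hg k]

theorem isHomogeneous_f_g (hf0 : f 0 = X 0 + X 1) (hg0 : g 0 = X 1)
    (heven : ∀ k, Even k → f (k + 1) = f k ∧ g (k + 1) = X 1 * g k)
    (hodd : ∀ k, ¬ Even k → f (k + 1) = X 0 * f k + g k ∧ g (k + 1) = X 1 * f k) (k : ℕ) :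
    (f k).IsHomogeneous ((k + 2) / 2) ∧ (g k).IsHomogeneous ((k + 3) / 2) := by
  induction k with
  | zero =>
    rw [hf0, hg0]
    exact ⟨(isHomogeneous_X _ _).add (isHomogeneous_X _ _), isHomogeneous_X _ _⟩
  | succ k ih =>
    obtain ⟨hf, hg⟩ := ih
    by_cases hk : Even k
    · obtain ⟨hf1, hg1⟩ := heven k hk
      obtain ⟨m, rfl⟩ := hk
      rw [hf1, hg1]
      refine ⟨?_, ?_⟩
      · convert hf using 1; omega
      · convert (isHomogeneous_X R 1).mul hg using 1; omega
    · obtain ⟨hf1, hg1⟩ := hodd k hk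
      obtain ⟨m, rfl⟩ := Nat.not_even_iff_odd.mp hk
      rw [hf1, hg1]
      refine ⟨?_, ?_⟩
      · refine IsHomogeneous.add ?_ ?_
        · convert (isHomogeneous_X R 0).mul hf using 1; omega
        · exact hg
      · convert (isHomogeneous_X R 1).mul hf using 1; omega

end Recursion

theorem stmt9 (f g : ℕ → MvPolynomial (Fin 2) (ZMod 2))
    (hf0 : f 0 = MvPolynomial.X 0 + MvPolynomial.X 1)
    (hg0 : g 0 = MvPolynomial.X 1)
    (heven : ∀ k, Even k →
      f (k + 1) = f k ∧ g (k + 1) = MvPolynomial.X 1 * g k)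
    (hodd : ∀ k, ¬ Even k →
      f (k + 1) = MvPolynomial.X 0 * f k + g k ∧ g (k + 1) = MvPolynomial.X 1 * f k) :
    ∀ k, (f k).IsHomogeneous ((k + 2) / 2) ∧
      MvPolynomial.coeff (Finsupp.single 0 ((k + 2) / 2)) (f k) = 1 ∧
      MvPolynomial.eval ![(1 : ZMod 2), 0] (f k) = 1 := by
  intro k
  have hom := (isHomogeneous_f_g f g hf0 hg0 heven hodd k).1
  have heval : eval ![(1 : ZMod 2), 0] (f k) = 1 :=
    eval_f_eq_one f g hf0
      (eval_g_eq_zero f g hg0 (fun k hk => (heven k hk).2) (fun k hk => (hodd k hk).2))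
      (fun k hk => (heven k hk).1) (fun k hk => (hodd k hk).1) k
  have hpoint : ![(1 : ZMod 2), 0] = Pi.single 0 1 := by
    ext i; fin_cases i <;> rfl
  refine ⟨hom, ?_, heval⟩
  rw [← hom.eval_piSingle_one, ← hpoint, heval]
end

section
/- Let φ^(k)(x) = f^(2k-1)(x,1) ∈ GF(2)[x] where f^(j) is defined by the parity-based recursion with f^(0)=x+z, g^(0)=z. Then φ^(1) = x+1, φ^(2) = x^2+x+1, and φ^(k) = x·φ^(k-1) + φ^(k-2) for all k ≥ 3. -/
theorem stmt10 (f g : ℕ → MvPolynomial (Fin 2) (ZMod 2))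
    (hf0 : f 0 = MvPolynomial.X 0 + MvPolynomial.X 1)
    (hg0 : g 0 = MvPolynomial.X 1)
    (heven : ∀ k, Even k →
      f (k + 1) = f k ∧ g (k + 1) = MvPolynomial.X 1 * g k)
    (hodd : ∀ k, ¬ Even k →
      f (k + 1) = MvPolynomial.X 0 * f k + g k ∧ g (k + 1) = MvPolynomial.X 1 * f k)
    (φ : ℕ → Polynomial (ZMod 2))
    (hφ : ∀ k, φ k = MvPolynomial.aeval ![Polynomial.X, 1] (f (2 * k - 1))) :
    φ 1 = Polynomial.X + 1 ∧
    φ 2 = Polynomial.X ^ 2 + Polynomial.X + 1 ∧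
    ∀ k, 3 ≤ k → φ k = Polynomial.X * φ (k - 1) + φ (k - 2) := by
  have hf1 : f 1 = f 0 := (heven 0 (by norm_num)).1
  refine ⟨?_, ?_, ?_⟩
  · rw [hφ]
    norm_num [hf1, hf0]
  · rw [hφ]
    have hf3 : f 3 = f 2 := (heven 2 (by norm_num)).1
    have hf2 : f 2 = MvPolynomial.X 0 * f 1 + g 1 := (hodd 1 (by norm_num)).1
    have hg1 : g 1 = MvPolynomial.X 1 * g 0 := (heven 0 (by norm_num)).2
    norm_num [hf3, hf2, hg1, hf1, hf0, hg0]
    ring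
  · intro k hk
    obtain ⟨m, rfl⟩ : ∃ m, k = m + 3 := ⟨k - 3, by omega⟩
    have e1 : 2 * (m + 3) - 1 = 2 * m + 5 := by omega
    have e2 : 2 * (m + 3) - 1 - 2 = 2 * m + 3 := by omega
    have h5 : f (2 * m + 5) = f (2 * m + 4) := (heven (2 * m + 4) (by simp [Nat.even_iff])).1
    have h4 : f (2 * m + 4) = MvPolynomial.X 0 * f (2 * m + 3) + g (2 * m + 3) :=
      (hodd (2 * m + 3) (by simp [Nat.even_iff])).1
    have h3 : g (2 * m + 3) = MvPolynomial.X 1 * g (2 * m + 2) :=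
      (heven (2 * m + 2) (by simp [Nat.even_iff])).2
    have h2 : g (2 * m + 2) = MvPolynomial.X 1 * f (2 * m + 1) :=
      (hodd (2 * m + 1) (by simp [Nat.even_iff])).2
    have e3 : m + 3 - 1 = m + 2 := rfl
    have e4 : m + 3 - 2 = m + 1 := rfl
    have e5 : 2 * (m + 2) - 1 = 2 * m + 3 := by omega
    have e6 : 2 * (m + 1) - 1 = 2 * m + 1 := by omega
    rw [hφ, hφ, hφ, e1, e3, e4, e5, e6, h5, h4, h3, h2]
    simp [mul_assoc]
end

section
/- Let c ∈ F[x] be a monic nonzero polynomial of degree l over a field F, and let (s_0,…,s_{n-1}) be a sequence in F with inverse form G = Σ_{j=1-n}^{0} s_{-j} x^j z^{1-n-j} ∈ F[x^{-1},z^{-1}], where F[x^{-1},z^{-1}] carries the F[x,z]-module structure given by x^p z^q ∘ x^{-u} z^{-v} = x^{p-u} z^{q-v} if p ≤ u and q ≤ v, and 0 otherwise. Then the homogenisation c^∧(x,z) = z^l c(x/z) annihilates G (i.e., c^∧ ∘ G = 0) if and only if c is a characteristic polynomial of (s_0,…,s_{n-1}), i.e., either l ≥ n or c_l s_{k+l}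 + ··· + c_0 s_k = 0 for all 0 ≤ k ≤ n−l−1. -/
/-- The action `φ ∘ G` of a polynomial `φ ∈ F[x,z]` on an inverse polynomial
`G ∈ F[x⁻¹,z⁻¹]` (represented as a function on exponent pairs, where `(u,v)`
stands for `x^{-u} z^{-v}`), evaluated at position `(u,v)`:
`(φ ∘ G)(u,v) = ∑ φ_{p,q} · G(u+p, v+q)`, which is the bilinear extension of
`x^p z^q ∘ x^{-u} z^{-v} = x^{p-u} z^{q-v}` if `p ≤ u, q ≤ v`, else `0`. -/
noncomputable def invAct {F : Type*} [Field F] (φ : MvPolynomial (Fin 2) F)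
    (G : ℕ × ℕ → F) (u v : ℕ) : F :=
  ∑ m ∈ φ.support, MvPolynomial.coeff m φ * G (u + m 0, v + m 1)

lemma invAct_eq_sum {F : Type*} [Field F] (φ : MvPolynomial (Fin 2) F)
    (G : ℕ × ℕ → F) (u v : ℕ) :
    invAct φ G u v = Finsupp.sum (AddMonoidAlgebra.coeff φ) (fun m a => a * G (u + m 0, v + m 1)) := by
  rw [invAct, MvPolynomial.sum_def]

lemma invAct_key {F : Type*} [Field F] (c : Polynomial F) (l : ℕ)
    (G : ℕ × ℕ → F) (u v : ℕ) :
    invAct (∑ i ∈ Finset.range (l + 1),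
        MvPolynomial.monomial (Finsupp.single 0 i + Finsupp.single 1 (l - i))
          (c.coeff i)) G u v
    = ∑ i ∈ Finset.range (l + 1), c.coeff i * G (u + i, v + (l - i)) := by
  rw [invAct_eq_sum, AddMonoidAlgebra.coeff_sum]
  have h2 := Finsupp.sum_finset_sum_index (s := Finset.range (l + 1))
    (g := fun i : ℕ => AddMonoidAlgebra.coeff (MvPolynomial.monomial
        (Finsupp.single (0 : Fin 2) i + Finsupp.single 1 (l - i)) (c.coeff i) :
        MvPolynomial (Fin 2) F))
    (h := fun (m : Fin 2 →₀ ℕ) (a : F) => a * G (u + m 0, v + m 1))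
    (fun m => zero_mul _) (fun m b₁ b₂ => add_mul _ _ _)
  rw [← h2]
  refine Finset.sum_congr rfl fun i _ => ?_
  simp only [← MvPolynomial.single_eq_monomial, AddMonoidAlgebra.coeff_single]
  refine (Finsupp.sum_single_index
    (h := fun (m : Fin 2 →₀ ℕ) (a : F) => a * G (u + m 0, v + m 1)) (zero_mul _)).trans ?_
  simp [Finsupp.single_apply]

theorem stmt11 {F : Type*} [Field F] (n : ℕ) (hn : 1 ≤ n) (s : ℕ → F)
    (c : Polynomial F) (hc : c.Monic) (l : ℕ) (hl : c.natDegree = l)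
    (G : ℕ × ℕ → F)
    (hG : ∀ p, G p = if p.1 + p.2 = n - 1 then s p.1 else 0) :
    (∀ u v, invAct (∑ i ∈ Finset.range (l + 1),
        MvPolynomial.monomial (Finsupp.single 0 i + Finsupp.single 1 (l - i))
          (c.coeff i)) G u v = 0)
      ↔ (n ≤ l ∨ ∀ k, k + l + 1 ≤ n →
          ∑ i ∈ Finset.range (l + 1), c.coeff i * s (k + i) = 0) := by
  have key : ∀ u v, invAct (∑ i ∈ Finset.range (l + 1),
        MvPolynomial.monomial (Finsupp.single 0 i + Finsupp.single 1 (l - i))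
          (c.coeff i)) G u v =
      if u + v + l = n - 1 then ∑ i ∈ Finset.range (l + 1), c.coeff i * s (u + i)
      else 0 := by
    intro u v
    rw [invAct_key]
    split_ifs with h
    · refine Finset.sum_congr rfl fun i hi => ?_
      rw [hG]
      have hi' : i ≤ l := Nat.lt_succ_iff.mp (Finset.mem_range.mp hi)
      have hc' : u + i + (v + (l - i)) = n - 1 := by omega
      simp [hc']
    · refine Finset.sum_eq_zero fun i hi => ?_
      rw [hG]
      have hi' : i ≤ l := Nat.lt_succ_iff.mp (Finset.mem_range.mp hi)
      have hc' : ¬(u + i + (v + (l - i)) = n - 1) := by omega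
      simp [hc']
  constructor
  · intro H
    by_cases hnl : n ≤ l
    · exact Or.inl hnl
    · refine Or.inr fun k hk => ?_
      have h0 := H k (n - 1 - l - k)
      rw [key] at h0
      have hcond : k + (n - 1 - l - k) + l = n - 1 := by omega
      simpa [hcond] using h0
  · intro H u v
    rw [key]
    split_ifs with h
    · rcases H with hnl | H
      · omega
      · exact H u (by omega)
    · rfl
end

section
/- Define the Rueppel sequence r : ℕ → GF(2) by r_i = 1 if i+1 is a power of 2, else 0. Then for every n ≥ 1, the linear complexity of (r_0,…,r_{n-1}) (the minimal degree of a monic polynomial c with c_l r_{k+l} + ··· + c_0 r_k = 0 for all 0 ≤ k ≤ n−l−1, or degree ≥ n) equals ⌊(n+1)/2⌋. -/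
open Polynomial PowerSeries Finset

open scoped Classical in
/-- The Rueppel sequence: `r i = 1` iff `i + 1` is a power of `2`. -/
noncomputable def rueppel : ℕ → ZMod 2 := fun i =>
  if ∃ k : ℕ, i + 1 = 2 ^ k then 1 else 0

lemma zmod2_cases (a : ZMod 2) : a = 0 ∨ a = 1 := by
  have h : ∀ b : ZMod 2, b = 0 ∨ b = 1 := by decide
  exact h a

lemma zmod2_add_self (a : ZMod 2) : a + a = 0 := by
  rcases zmod2_cases a with h | h <;> simp [h] <;> decide

lemma zmod2_sq (a : ZMod 2) : a * a = a := by
  rcases zmod2_cases a with h | h <;> simp [h]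

lemma rueppel_zero : rueppel 0 = 1 := by
  simp only [rueppel]
  rw [if_pos ⟨0, rfl⟩]

lemma rueppel_odd (t : ℕ) : rueppel (2 * t + 1) = rueppel t := by
  simp only [rueppel]
  by_cases h : ∃ k, t + 1 = 2 ^ k
  · obtain ⟨k, hk⟩ := h
    rw [if_pos ⟨k + 1, by rw [pow_succ]; omega⟩, if_pos ⟨k, hk⟩]
  · rw [if_neg ?_, if_neg h]
    rintro ⟨k, hk⟩
    rcases k with _ | k
    · simp at hk
    · exact h ⟨k, by rw [pow_succ] at hk; omega⟩

lemma rueppel_even (t : ℕ) : rueppel (2 * t + 2) = 0 := by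
  simp only [rueppel]
  rw [if_neg]
  rintro ⟨k, hk⟩
  rcases k with _ | k
  · simp at hk
  · rw [pow_succ] at hk
    have : 2 ^ k ≥ 1 := Nat.one_le_two_pow
    omega

noncomputable def RR : PowerSeries (ZMod 2) := PowerSeries.mk rueppel

lemma coeff_sq_odd (S : PowerSeries (ZMod 2)) (t : ℕ) :
    PowerSeries.coeff (2 * t + 1) (S ^ 2) = 0 := by
  rw [sq, PowerSeries.coeff_mul]
  refine Finset.sum_involution (fun p _ => (p.2, p.1)) ?_ ?_ ?_ ?_
  · intro p _
    rw [mul_comm]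
    exact zmod2_add_self _
  · intro p hp hf
    simp only [Finset.HasAntidiagonal.mem_antidiagonal] at hp
    intro h
    have h1 : p.2 = p.1 := congrArg Prod.fst h
    omega
  · intro p hp
    simp only [Finset.HasAntidiagonal.mem_antidiagonal] at hp ⊢
    omega
  · intro p _
    rfl

lemma coeff_sq_even (S : PowerSeries (ZMod 2)) (t : ℕ) :
    PowerSeries.coeff (2 * t) (S ^ 2) = PowerSeries.coeff t S := by
  rw [sq, PowerSeries.coeff_mul]
  have hmem : (t, t) ∈ Finset.HasAntidiagonal.antidiagonal (2 * t) := by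
    simp only [Finset.HasAntidiagonal.mem_antidiagonal]; omega
  rw [← Finset.add_sum_erase _ _ hmem]
  have : ∑ p ∈ (Finset.HasAntidiagonal.antidiagonal (2 * t)).erase (t, t),
      PowerSeries.coeff p.1 S * PowerSeries.coeff p.2 S = 0 := by
    refine Finset.sum_involution (fun p _ => (p.2, p.1)) ?_ ?_ ?_ ?_
    · intro p _
      rw [mul_comm]
      exact zmod2_add_self _
    · intro p hp _
      simp only [Finset.mem_erase, Finset.HasAntidiagonal.mem_antidiagonal] at hp
      intro h
      have h1 : p.2 = p.1 := congrArg Prod.fst h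
      apply hp.1
      have : p.1 = t := by omega
      rw [Prod.ext_iff]
      constructor <;> simp [this, h1 ▸ this]
    · intro p hp
      simp only [Finset.mem_erase, Finset.HasAntidiagonal.mem_antidiagonal] at hp ⊢
      refine ⟨?_, by omega⟩
      intro h
      apply hp.1
      rw [Prod.ext_iff] at h ⊢
      exact ⟨h.2, h.1⟩
    · intro p _
      rfl
  rw [this, add_zero, zmod2_sq]

lemma ps_two_eq_zero : (2 : PowerSeries (ZMod 2)) = 0 := by
  have h : (2 : PowerSeries (ZMod 2)) = PowerSeries.C (2 : ZMod 2) := (map_ofNat _ 2).symm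
  rw [h, show (2 : ZMod 2) = 0 from rfl, map_zero]

lemma hRR : PowerSeries.X * RR ^ 2 + RR = 1 := by
  ext m
  rcases m with _ | m
  · simp [RR, PowerSeries.coeff_zero_X_mul, rueppel_zero]
  · rw [map_add, PowerSeries.coeff_succ_X_mul]
    rcases Nat.even_or_odd m with ⟨t, ht⟩ | ⟨t, ht⟩
    · have h2t : m = 2 * t := by omega
      subst h2t
      rw [coeff_sq_even]
      have : (2 * t + 1) = 2 * t + 1 := rfl
      simp only [RR, PowerSeries.coeff_mk, PowerSeries.coeff_one]
      rw [rueppel_odd, zmod2_add_self]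
      simp
    · have h2t : m = 2 * t + 1 := by omega
      subst h2t
      rw [coeff_sq_odd]
      simp only [RR, PowerSeries.coeff_mk, PowerSeries.coeff_one]
      rw [show 2 * t + 1 + 1 = 2 * t + 2 by rfl, rueppel_even]
      simp

lemma coeff_mul_RR (q : Polynomial (ZMod 2)) (L m : ℕ) (hq : q.natDegree ≤ L) (hm : L ≤ m) :
    PowerSeries.coeff m ((q : PowerSeries (ZMod 2)) * RR) =
      ∑ j ∈ Finset.range (L + 1), q.coeff j * rueppel (m - j) := by
  rw [PowerSeries.coeff_mul, Finset.Nat.sum_antidiagonal_eq_sum_range_succ_mk]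
  simp only [Polynomial.coeff_coe, RR, PowerSeries.coeff_mk]
  symm
  apply Finset.sum_subset
  · exact Finset.range_subset_range.2 (by omega)
  · intro j hj hj2
    simp only [Finset.mem_range] at hj hj2
    rw [Polynomial.coeff_eq_zero_of_natDegree_lt (by omega), zero_mul]

lemma lemA (u : Polynomial (ZMod 2)) (d N : ℕ) (hu0 : u.coeff 0 = 1) (hud : u.natDegree ≤ d)
    (h2d : 2 * d < N)
    (hvan : ∀ m, d ≤ m → m < N → PowerSeries.coeff m ((u : PowerSeries (ZMod 2)) * RR) = 0) : False := by
  -- dispose of d = 0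
  rcases Nat.eq_zero_or_pos d with rfl | hd
  · have := hvan 0 le_rfl (by omega)
    rw [coeff_mul_RR u 0 0 hud le_rfl] at this
    simp [rueppel_zero, hu0] at this
  set U : PowerSeries (ZMod 2) := (↑u : PowerSeries (ZMod 2)) with hU
  set p : Polynomial (ZMod 2) :=
    ∑ i ∈ Finset.range d, Polynomial.monomial i (PowerSeries.coeff i (U * RR)) with hp
  have hpc : ∀ i, p.coeff i =
      if i < d then PowerSeries.coeff i (U * RR) else 0 := by
    intro i
    rw [hp, Polynomial.finset_sum_coeff]
    simp only [Polynomial.coeff_monomial]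
    rw [Finset.sum_ite_eq' (Finset.range d) i]
    simp [Finset.mem_range]
  set P : PowerSeries (ZMod 2) := (↑p : PowerSeries (ZMod 2)) with hP
  set E : PowerSeries (ZMod 2) := U * RR - P with hE
  have hEc : ∀ m, m < N → PowerSeries.coeff m E = 0 := by
    intro m hm
    rw [hE, map_sub, hP, Polynomial.coeff_coe, hpc m]
    by_cases h : m < d
    · rw [if_pos h, sub_self]
    · rw [if_neg h, hvan m (by omega) hm, sub_zero]
  have key : PowerSeries.X * P ^ 2 + U * P + U ^ 2
      = PowerSeries.X * E ^ 2 + U * E := by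
    rw [hE]
    linear_combination (-(U ^ 2)) * hRR +
      (PowerSeries.X * U * RR * P + U * P) * ps_two_eq_zero
  have hprod0 : ∀ m, m < N → PowerSeries.coeff m (PowerSeries.X * E ^ 2 + U * E) = 0 := by
    intro m hm
    rw [map_add]
    have h1 : PowerSeries.coeff m (PowerSeries.X * E ^ 2) = 0 := by
      rcases m with _ | t
      · exact PowerSeries.coeff_zero_X_mul _
      · rw [PowerSeries.coeff_succ_X_mul, sq, PowerSeries.coeff_mul]
        apply Finset.sum_eq_zero
        intro x hx
        simp only [Finset.HasAntidiagonal.mem_antidiagonal] at hx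
        rw [hEc x.1 (by omega), zero_mul]
    have h2 : PowerSeries.coeff m (U * E) = 0 := by
      rw [PowerSeries.coeff_mul]
      apply Finset.sum_eq_zero
      intro x hx
      simp only [Finset.HasAntidiagonal.mem_antidiagonal] at hx
      rw [hEc x.2 (by omega), mul_zero]
    rw [h1, h2, add_zero]
  have hpd : p.natDegree ≤ d - 1 := by
    rw [Polynomial.natDegree_le_iff_coeff_eq_zero]
    intro M hM
    rw [hpc M, if_neg (by omega)]
  set G : Polynomial (ZMod 2) := Polynomial.X * p ^ 2 + u * p + u ^ 2 with hG
  have hGcoe : ((G : Polynomial (ZMod 2)) : PowerSeries (ZMod 2))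
      = PowerSeries.X * E ^ 2 + U * E := by
    rw [hG, Polynomial.coe_add, Polynomial.coe_add, Polynomial.coe_mul, Polynomial.coe_mul,
      Polynomial.coe_pow, Polynomial.coe_pow, Polynomial.coe_X, ← hU, ← hP]
    exact key
  have hGdeg : G.natDegree ≤ 2 * d := by
    rw [hG]
    refine le_trans (Polynomial.natDegree_add_le _ _) ?_
    refine max_le (le_trans (Polynomial.natDegree_add_le _ _) (max_le ?_ ?_)) ?_
    · refine le_trans (Polynomial.natDegree_mul_le) ?_
      have := Polynomial.natDegree_pow_le (p := p) (n := 2)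
      simp only [Polynomial.natDegree_X]
      omega
    · refine le_trans (Polynomial.natDegree_mul_le) (by omega)
    · have := Polynomial.natDegree_pow_le (p := u) (n := 2)
      omega
  have hG0 : G = 0 := by
    ext m
    by_cases hm : m < N
    · rw [← Polynomial.coeff_coe, hGcoe]
      simpa using hprod0 m hm
    · rw [Polynomial.coeff_eq_zero_of_natDegree_lt (by omega)]
      simp
  -- now the contradiction
  have hune : u ≠ 0 := fun h => by simp [h] at hu0
  have hp0 : p.coeff 0 = 1 := by
    rw [hpc 0, if_pos hd, PowerSeries.coeff_zero_eq_constantCoeff, map_mul]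
    simp [hU, Polynomial.coeff_coe, RR, hu0, rueppel_zero,
      PowerSeries.constantCoeff_mk, Polynomial.coeff_zero_eq_eval_zero]
  have hpne : p ≠ 0 := fun h => by simp [h] at hp0
  set a := u.natDegree
  set b := p.natDegree
  by_cases hab : b < a
  · have hcoeff : G.coeff (2 * a) ≠ 0 := by
      rw [hG]
      simp only [Polynomial.coeff_add]
      rw [Polynomial.coeff_eq_zero_of_natDegree_lt
          (lt_of_le_of_lt Polynomial.natDegree_mul_le ?_),
        Polynomial.coeff_eq_zero_of_natDegree_lt
          (lt_of_le_of_lt Polynomial.natDegree_mul_le ?_)]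
      · rw [zero_add, zero_add, show 2 * a = (u ^ 2).natDegree by
          rw [Polynomial.natDegree_pow]]
        rw [Polynomial.coeff_natDegree]
        exact Polynomial.leadingCoeff_ne_zero.2 (pow_ne_zero 2 hune)
      · omega
      · have := Polynomial.natDegree_pow_le (p := p) (n := 2)
        simp only [Polynomial.natDegree_X]
        omega
    exact hcoeff (by rw [hG0]; simp)
  · have hcoeff : G.coeff (2 * b + 1) ≠ 0 := by
      rw [hG]
      simp only [Polynomial.coeff_add]
      rw [Polynomial.coeff_X_mul,
        Polynomial.coeff_eq_zero_of_natDegree_lt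
          (lt_of_le_of_lt Polynomial.natDegree_mul_le (by omega)),
        Polynomial.coeff_eq_zero_of_natDegree_lt (show (u^2).natDegree < 2*b+1 by
          rw [Polynomial.natDegree_pow]; omega)]
      rw [add_zero, add_zero, show 2 * b = (p ^ 2).natDegree by
        rw [Polynomial.natDegree_pow]]
      rw [Polynomial.coeff_natDegree]
      exact Polynomial.leadingCoeff_ne_zero.2 (pow_ne_zero 2 hpne)
    exact hcoeff (by rw [hG0]; simp)

noncomputable def fmap (L K : ℕ) : (Fin (L + 1) → ZMod 2) →ₗ[ZMod 2] (Fin K → ZMod 2) where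
  toFun v := fun m => ∑ j : Fin (L + 1), v j * rueppel (L + (m : ℕ) - (j : ℕ))
  map_add' v w := by
    funext m
    simp [add_mul, Finset.sum_add_distrib]
  map_smul' a v := by
    funext m
    simp [Finset.mul_sum, smul_eq_mul, mul_assoc]

lemma fmap_apply (L K : ℕ) (v : Fin (L + 1) → ZMod 2) (m : Fin K) :
    fmap L K v m = ∑ j : Fin (L + 1), v j * rueppel (L + (m : ℕ) - (j : ℕ)) := rfl

lemma zmod2_ne_zero {a : ZMod 2} (h : a ≠ 0) : a = 1 := by
  rcases zmod2_cases a with h' | h'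
  · exact absurd h' h
  · exact h'

lemma zmod2_ne_one {a : ZMod 2} (h : a ≠ 1) : a = 0 := by
  rcases zmod2_cases a with h' | h'
  · exact h'
  · exact absurd h' h

set_option maxHeartbeats 1000000 in
lemma exists_good (n : ℕ) (hn : 1 ≤ n) :
    ∃ v : Fin ((n + 1) / 2 + 1) → ZMod 2,
      v ∈ LinearMap.ker (fmap ((n + 1) / 2) (n - (n + 1) / 2)) ∧ v 0 = 1 := by
  set L := (n + 1) / 2 with hLdef
  have hL1 : 1 ≤ L := by omega
  have hn2L : n ≤ 2 * L := by omega
  set K := n - L with hKdef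
  set T := 2 * L + 1 - n with hTdef
  have hT1 : 1 ≤ T := by omega
  have hT2 : T ≤ 2 := by omega
  -- rank-nullity
  have hrank : T ≤ Module.finrank (ZMod 2) (LinearMap.ker (fmap L K)) := by
    have h1 := LinearMap.finrank_range_add_finrank_ker (fmap L K)
    have h2 : Module.finrank (ZMod 2) (LinearMap.range (fmap L K))
        ≤ Module.finrank (ZMod 2) (Fin K → ZMod 2) := Submodule.finrank_le _
    rw [Module.finrank_fin_fun] at h1 h2
    omega
  by_contra hno
  push_neg at hno
  have hno' : ∀ v ∈ LinearMap.ker (fmap L K), v 0 = 0 := by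
    intro v hv
    exact zmod2_ne_one (hno v hv)
  -- map killing coordinates 1..T-1
  set g : (LinearMap.ker (fmap L K)) →ₗ[ZMod 2] (Fin (T - 1) → ZMod 2) :=
    { toFun := fun w m => (w : Fin (L + 1) → ZMod 2) ⟨(m : ℕ) + 1, by omega⟩
      map_add' := fun w x => rfl
      map_smul' := fun a w => rfl } with hgdef
  have hgnotinj : ¬ Function.Injective g := by
    intro hinj
    have := LinearMap.finrank_le_finrank_of_injective hinj
    rw [Module.finrank_fin_fun] at this
    omega
  rw [← LinearMap.ker_eq_bot] at hgnotinj
  obtain ⟨w, hwker, hwne⟩ := Submodule.ne_bot_iff _ |>.1 hgnotinj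
  set v : Fin (L + 1) → ZMod 2 := (w : Fin (L + 1) → ZMod 2) with hvdef
  have hvker : fmap L K v = 0 := w.2
  have hvne : v ≠ 0 := fun h => hwne (Subtype.ext h)
  have hvlow : ∀ (j : ℕ) (hj : j < L + 1), j < T → v ⟨j, hj⟩ = 0 := by
    intro j hjL hj
    rcases Nat.eq_zero_or_pos j with hj0 | hj0
    · subst hj0
      exact hno' v w.2
    · have hj1 : j - 1 < T - 1 := by omega
      have := congrFun (LinearMap.mem_ker.1 hwker) ⟨j - 1, hj1⟩
      simp only [hgdef, LinearMap.coe_mk, AddHom.coe_mk, Pi.zero_apply] at this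
      convert this using 2
      apply Fin.ext
      simp
      omega
  -- the coefficient function
  set w' : ℕ → ZMod 2 := fun j => if h : j < L + 1 then v ⟨j, h⟩ else 0 with hw'def
  have hw'c : ∀ (j : ℕ) (h : j < L + 1), w' j = v ⟨j, h⟩ := by
    intro j h
    simp only [hw'def, dif_pos h]
  have hw'z : ∀ j : ℕ, L + 1 ≤ j → w' j = 0 := by
    intro j h
    simp only [hw'def, dif_neg (by omega : ¬ j < L + 1)]
  have hex : ∃ j, w' j ≠ 0 := by
    by_contra hall
    push_neg at hall
    apply hvne
    funext j
    have := hall (j : ℕ)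
    rw [hw'c (j : ℕ) j.isLt] at this
    simpa using this
  obtain ⟨j0, hj0ne, hj0min⟩ : ∃ j0, w' j0 ≠ 0 ∧ ∀ j, j < j0 → w' j = 0 :=
    ⟨Nat.find hex, Nat.find_spec hex, fun j hj => of_not_not (Nat.find_min hex hj)⟩
  have hj0L : j0 ≤ L := by
    by_contra h
    exact hj0ne (hw'z j0 (by omega))
  have hj0T : T ≤ j0 := by
    by_contra h
    exact hj0ne (by rw [hw'c j0 (by omega)]; exact hvlow j0 (by omega) (by omega))
  -- build u and contradict lemA
  set u : Polynomial (ZMod 2) :=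
    ∑ i ∈ Finset.range (L + 1 - j0), Polynomial.monomial i (w' (j0 + i)) with hudef
  have huc : ∀ i, u.coeff i = w' (j0 + i) := by
    intro i
    rw [hudef, Polynomial.finset_sum_coeff]
    simp only [Polynomial.coeff_monomial]
    rw [Finset.sum_ite_eq' (Finset.range (L + 1 - j0)) i]
    by_cases h : i ∈ Finset.range (L + 1 - j0)
    · rw [if_pos h]
    · rw [if_neg h]
      simp only [Finset.mem_range] at h
      exact (hw'z (j0 + i) (by omega)).symm
  refine lemA u (L - j0) (n - j0) ?_ ?_ ?_ ?_
  · rw [huc 0, Nat.add_zero]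
    exact zmod2_ne_zero hj0ne
  · rw [Polynomial.natDegree_le_iff_coeff_eq_zero]
    intro M hM
    rw [huc M]
    exact hw'z (j0 + M) (by omega)
  · omega
  · intro m hm1 hm2
    rw [coeff_mul_RR u (L - j0) m (by
      rw [Polynomial.natDegree_le_iff_coeff_eq_zero]
      intro M hM
      rw [huc M]
      exact hw'z (j0 + M) (by omega)) hm1]
    set M := m + j0 with hMdef
    have hML : L ≤ M := by omega
    have hMn : M < n := by omega
    have hker := congrFun hvker ⟨M - L, by omega⟩
    rw [fmap_apply] at hker
    simp only [Pi.zero_apply] at hker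
    have hLM : L + (M - L) = M := by omega
    rw [hLM] at hker
    have hsum : ∑ j : Fin (L + 1), v j * rueppel (M - (j : ℕ))
        = ∑ j ∈ Finset.range (L + 1), w' j * rueppel (M - j) := by
      rw [← Fin.sum_univ_eq_sum_range (fun j => w' j * rueppel (M - j)) (L + 1)]
      apply Finset.sum_congr rfl
      intro j _
      rw [hw'c (j : ℕ) j.isLt]
    rw [hsum] at hker
    rw [← Finset.sum_range_add_sum_Ico _ (by omega : j0 ≤ L + 1)] at hker
    have hfirst : ∑ j ∈ Finset.range j0, w' j * rueppel (M - j) = 0 := by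
      apply Finset.sum_eq_zero
      intro j hj
      simp only [Finset.mem_range] at hj
      rw [hj0min j hj, zero_mul]
    rw [hfirst, zero_add, Finset.sum_Ico_eq_sum_range] at hker
    have hidx : L + 1 - j0 = L - j0 + 1 := by omega
    rw [← hker, hidx]
    apply Finset.sum_congr rfl
    intro i hi
    simp only [Finset.mem_range] at hi
    have harg : M - (j0 + i) = m - i := by omega
    rw [huc i, harg]

set_option maxHeartbeats 1000000 in
theorem stmt15 (n : ℕ) (hn : 1 ≤ n) :
    sInf {l : ℕ | ∃ c : Polynomial (ZMod 2), c.Monic ∧ c.natDegree = l ∧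
        ∀ k, k + l + 1 ≤ n →
          ∑ i ∈ Finset.range (l + 1), c.coeff i * rueppel (k + i) = 0}
      = (n + 1) / 2 := by
  set L := (n + 1) / 2 with hLdef
  have hL1 : 1 ≤ L := by omega
  have hn2L : n ≤ 2 * L := by omega
  -- membership
  have hmem : L ∈ {l : ℕ | ∃ c : Polynomial (ZMod 2), c.Monic ∧ c.natDegree = l ∧
      ∀ k, k + l + 1 ≤ n →
        ∑ i ∈ Finset.range (l + 1), c.coeff i * rueppel (k + i) = 0} := by
    obtain ⟨v, hvker, hv0⟩ := exists_good n hn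
    set K := n - L with hKdef
    set w : ℕ → ZMod 2 := fun j => if h : j < L + 1 then v ⟨j, h⟩ else 0 with hwdef
    have hwc : ∀ (j : ℕ) (h : j < L + 1), w j = v ⟨j, h⟩ := by
      intro j h
      simp only [hwdef, dif_pos h]
    have hwz : ∀ j : ℕ, L + 1 ≤ j → w j = 0 := by
      intro j h
      simp only [hwdef, dif_neg (by omega : ¬ j < L + 1)]
    set q : Polynomial (ZMod 2) :=
      ∑ j ∈ Finset.range (L + 1), Polynomial.monomial j (w j) with hqdef
    have hqc : ∀ i, q.coeff i = w i := by
      intro i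
      rw [hqdef, Polynomial.finset_sum_coeff]
      simp only [Polynomial.coeff_monomial]
      rw [Finset.sum_ite_eq' (Finset.range (L + 1)) i]
      by_cases h : i ∈ Finset.range (L + 1)
      · rw [if_pos h]
      · rw [if_neg h]
        simp only [Finset.mem_range] at h
        exact (hwz i (by omega)).symm
    set c : Polynomial (ZMod 2) := Polynomial.reflect L q with hcdef
    have hcdeg : c.natDegree ≤ L := by
      rw [Polynomial.natDegree_le_iff_coeff_eq_zero]
      intro M hM
      rw [hcdef, Polynomial.coeff_reflect, Polynomial.revAt_eq_self_of_lt hM, hqc M]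
      exact hwz M (by omega)
    have hcL : c.coeff L = 1 := by
      rw [hcdef, Polynomial.coeff_reflect, Polynomial.revAt_le (le_refl L), Nat.sub_self,
        hqc 0, hwc 0 (by omega)]
      rw [← hv0]
      congr 1
    have hmonic : c.Monic := Polynomial.monic_of_natDegree_le_of_coeff_eq_one L hcdeg hcL
    have hdeg : c.natDegree = L :=
      le_antisymm hcdeg (Polynomial.le_natDegree_of_ne_zero (by rw [hcL]; exact one_ne_zero))
    refine ⟨c, hmonic, hdeg, ?_⟩
    intro k hk
    have hcc : ∀ i, i ≤ L → c.coeff i = w (L - i) := by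
      intro i hi
      rw [hcdef, Polynomial.coeff_reflect, Polynomial.revAt_le hi, hqc]
    have hrefl := Finset.sum_range_reflect (fun i => w i * rueppel (k + L - i)) (L + 1)
    simp only [Nat.add_sub_cancel] at hrefl
    have step1 : ∑ i ∈ Finset.range (L + 1), c.coeff i * rueppel (k + i)
        = ∑ i ∈ Finset.range (L + 1), w (L - i) * rueppel (k + L - (L - i)) := by
      apply Finset.sum_congr rfl
      intro i hi
      simp only [Finset.mem_range] at hi
      rw [hcc i (by omega)]
      congr 2
      omega
    rw [step1, hrefl]
    have hker := congrFun (LinearMap.mem_ker.1 hvker) ⟨k, by omega⟩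
    rw [fmap_apply] at hker
    simp only [Pi.zero_apply] at hker
    rw [← hker]
    rw [← Fin.sum_univ_eq_sum_range (fun j => w j * rueppel (k + L - j)) (L + 1)]
    apply Finset.sum_congr rfl
    intro j _
    rw [hwc (j : ℕ) j.isLt]
    congr 2
    omega
  apply le_antisymm
  · exact Nat.sInf_le hmem
  · apply le_csInf ⟨L, hmem⟩
    intro l hl
    by_contra hcon
    push_neg at hcon
    obtain ⟨c, hmc, hdeg, hrec⟩ := hl
    have h2l : 2 * l < n := by omega
    refine lemA (Polynomial.reflect l c) l n ?_ ?_ h2l ?_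
    · rw [Polynomial.coeff_reflect, Polynomial.revAt_zero]
      rw [← hdeg]
      exact hmc.coeff_natDegree
    · rw [Polynomial.natDegree_le_iff_coeff_eq_zero]
      intro M hM
      rw [Polynomial.coeff_reflect, Polynomial.revAt_eq_self_of_lt hM]
      exact Polynomial.coeff_eq_zero_of_natDegree_lt (by omega)
    · intro m hm1 hm2
      rw [coeff_mul_RR (Polynomial.reflect l c) l m (by
        rw [Polynomial.natDegree_le_iff_coeff_eq_zero]
        intro M hM
        rw [Polynomial.coeff_reflect, Polynomial.revAt_eq_self_of_lt hM]
        exact Polynomial.coeff_eq_zero_of_natDegree_lt (by omega)) hm1]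
      set k := m - l with hkdef
      have hrefl := Finset.sum_range_reflect (fun i => c.coeff i * rueppel (k + i)) (l + 1)
      simp only [Nat.add_sub_cancel] at hrefl
      have step1 : ∑ j ∈ Finset.range (l + 1), (Polynomial.reflect l c).coeff j * rueppel (m - j)
          = ∑ j ∈ Finset.range (l + 1), c.coeff (l - j) * rueppel (k + (l - j)) := by
        apply Finset.sum_congr rfl
        intro j hj
        simp only [Finset.mem_range] at hj
        rw [Polynomial.coeff_reflect, Polynomial.revAt_le (by omega : j ≤ l)]
        congr 2
        omega
      rw [step1, hrefl]
      exact hrec k (by omega)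
end

section
/- Over GF(2), define polynomials c_k by c_{-1} = 0, c_0 = 1, c_1 = (x+1)·c_0 + c_{-1} = x+1, and c_k = x·c_{k-1} + c_{k-2} for k ≥ 2 (so the quotients in the continued-fraction/Euclidean expansion are q_1 = x+1 and q_k = x for k ≥ 2). Let φ^(k) = f^(2k-1)(x,1) arising from the parity recursion f^(0)=x+z, g^(0)=z, (f^(j+1),g^(j+1)) = (f^(j), z g^(j)) if j even and (x f^(j)+g^(j), z f^(j)) if j odd. Then c_k = φ^(k) for all k ≥ 1. -/
/-!
Two steps of the parity recursion give `f (2n+5) = x f (2n+3) + z² f (2n+1)`, because the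
`g`-term entering at an odd step is `z² f` from two steps earlier. At `z = 1` the odd-indexed
terms therefore satisfy the recurrence `u (n+2) = x u (n+1) + u n` of the `c k`, and the first
two of them are `x + 1` and `x² + x + 1`, as are `c 1` and `c 2`.
-/

open Polynomial

section ParityRecursion

variable {S : Type*} [CommSemiring S] {x z : S} {f g : ℕ → S}

theorem parityRecursion_odd_add_two
    (heven : ∀ k, Even k → f (k + 1) = f k ∧ g (k + 1) = z * g k)
    (hodd : ∀ k, ¬ Even k → f (k + 1) = x * f k + g k ∧ g (k + 1) = z * f k) (n : ℕ) :
    f (2 * n + 5) = x * f (2 * n + 3) + z ^ 2 * f (2 * n + 1) := by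
  have hf₄ : f (2 * n + 5) = f (2 * n + 4) := (heven (2 * n + 4) ⟨n + 2, by ring⟩).1
  have hf₃ : f (2 * n + 4) = x * f (2 * n + 3) + g (2 * n + 3) :=
    (hodd (2 * n + 3) (Nat.not_even_iff_odd.mpr ⟨n + 1, by ring⟩)).1
  have hg₂ : g (2 * n + 3) = z * g (2 * n + 2) := (heven (2 * n + 2) ⟨n + 1, by ring⟩).2
  have hg₁ : g (2 * n + 2) = z * f (2 * n + 1) :=
    (hodd (2 * n + 1) (Nat.not_even_iff_odd.mpr ⟨n, rfl⟩)).2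
  rw [hf₄, hf₃, hg₂, hg₁, ← mul_assoc, ← sq]

theorem parityRecursion_three
    (heven : ∀ k, Even k → f (k + 1) = f k ∧ g (k + 1) = z * g k)
    (hodd : ∀ k, ¬ Even k → f (k + 1) = x * f k + g k ∧ g (k + 1) = z * f k) :
    f 3 = x * f 0 + z * g 0 := by
  rw [(heven 2 even_two).1, (hodd 1 Nat.not_even_one).1, (heven 0 Even.zero).1,
    (heven 0 Even.zero).2]

end ParityRecursion

theorem LinearRecurrence.isSolution_two_iff {R : Type*} [CommSemiring R] (a b : R)
    (u : ℕ → R) :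
    (⟨2, ![b, a]⟩ : LinearRecurrence R).IsSolution u ↔
      ∀ n, u (n + 2) = a * u (n + 1) + b * u n := by
  simp [LinearRecurrence.IsSolution, Fin.sum_univ_two, add_comm]

theorem stmt19 (f g : ℕ → MvPolynomial (Fin 2) (ZMod 2))
    (hf0 : f 0 = MvPolynomial.X 0 + MvPolynomial.X 1)
    (hg0 : g 0 = MvPolynomial.X 1)
    (heven : ∀ k, Even k →
      f (k + 1) = f k ∧ g (k + 1) = MvPolynomial.X 1 * g k)
    (hodd : ∀ k, ¬ Even k →
      f (k + 1) = MvPolynomial.X 0 * f k + g k ∧ g (k + 1) = MvPolynomial.X 1 * f k)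
    (c : ℕ → Polynomial (ZMod 2))
    (hc0 : c 0 = 1) (hc1 : c 1 = Polynomial.X + 1)
    (hcrec : ∀ k, 2 ≤ k → c k = Polynomial.X * c (k - 1) + c (k - 2)) :
    ∀ k, 1 ≤ k →
      c k = MvPolynomial.aeval ![Polynomial.X, 1] (f (2 * k - 1)) := by
  let φ : ℕ → (ZMod 2)[X] := fun n ↦ MvPolynomial.aeval ![X, 1] (f (2 * n + 1))
  let E : LinearRecurrence (ZMod 2)[X] := ⟨2, ![1, X]⟩
  have hc : E.IsSolution (fun n ↦ c (n + 1)) :=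
    (LinearRecurrence.isSolution_two_iff _ _ _).mpr fun n ↦ by
      rw [hcrec (n + 3) le_add_self, one_mul]; rfl
  have hφ : E.IsSolution φ :=
    (LinearRecurrence.isSolution_two_iff _ _ _).mpr fun n ↦ by
      simp only [φ, show 2 * (n + 2) + 1 = 2 * n + 5 by ring,
        show 2 * (n + 1) + 1 = 2 * n + 3 by ring, parityRecursion_odd_add_two heven hodd n]
      simp
  have hinit : Set.EqOn (fun n ↦ c (n + 1)) φ (Finset.range E.order) := by
    intro n hn
    obtain rfl | rfl : n = 0 ∨ n = 1 := by simp [E] at hn; omega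
    · simp [φ, (heven 0 Even.zero).1, hf0, hc1]
    · simp [φ, parityRecursion_three heven hodd, hf0, hg0, hc0, hc1, hcrec 2 le_rfl]
  intro k hk
  obtain ⟨n, rfl⟩ := Nat.exists_eq_add_of_le' hk
  simpa [φ, Nat.mul_add] using congrFun ((E.eq_iff_eqOn_range_order _ _ hc hφ).mpr hinit) n
end
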